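/- arXiv:1708.09069 — 4 statements merged into one kernel-verified Lean document; each statement's English description precedes it below -/
import Mathlib

section
/- The number of spanning trees of the complete graph on n+1 vertices is (n+1)^(n-1). -/
/-!
Deleting a leaf of a tree on `S` and recording its neighbour, repeatedly until two vertices are
left, assigns to the tree a word of length `|S| - 2` over `S`. Every vertex `v` occurs in the word
`deg v - 1` times, so the set of leaves, hence the leaf deleted first, can be read off the word;
by induction the word determines the tree. Conversely every word `a :: s` arises: attach a
vertex missing from it as a leaf at `a` to a tree with word `s`. So there are `|S| ^ (|S| - 2)`
trees on `S`.
-/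

namespace SimpleGraph

variable {V : Type*} {G T : SimpleGraph V} {S : Finset V} {l a v x y : V}

theorem IsAcyclic.exists_neighborSet_eq_singleton [Finite V] (hG : G.IsAcyclic)
    (hxy : G.Adj x y) : ∃ u w, G.neighborSet u = {w} := by
  have : Nonempty V := ⟨x⟩
  obtain ⟨u, v, p, hp, hmax⟩ := Walk.exists_isPath_forall_isPath_length_le_length G
  have hnil : ¬p.Nil := fun h ↦ by
    simpa [h.length_eq_zero] using hmax x y hxy.toWalk (by simp [hxy.ne])
  refine ⟨u, p.snd, Set.eq_singleton_iff_unique_mem.2 ⟨p.adj_snd hnil, fun w hw ↦ ?_⟩⟩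
  refine hG.eq_snd_of_adj_start hp hw (by_contra fun hwp ↦ ?_)
  simpa using hmax _ _ (p.cons hw.symm) (hp.cons hwp)

theorem reachable_deleteEdges_of_neighborSet_eq_singleton (hl : G.neighborSet l = {a})
    (hx : G.Reachable l x) (hxl : x ≠ l) : (G.deleteEdges {s(l, a)}).Reachable a x := by
  obtain ⟨p, hp⟩ := hx.exists_isPath
  cases p with
  | nil => exact absurd rfl hxl
  | cons h q =>
    obtain rfl : _ = a := by simpa [hl] using (show _ ∈ G.neighborSet l from h)
    rw [Walk.cons_isPath_iff] at hp
    refine (q.transfer _ fun e he ↦ ?_).reachable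
    rw [edgeSet_deleteEdges]
    refine ⟨q.edges_subset_edgeSet he, ?_⟩
    rintro rfl
    exact hp.2 (q.fst_mem_support_of_mem_edges he)

theorem deleteEdges_sup_edge (h : G.Adj l a) : G.deleteEdges {s(l, a)} ⊔ edge l a = G := by
  ext x y
  simp only [sup_adj, deleteEdges_adj, edge_adj, Set.mem_singleton_iff, Sym2.eq_iff]
  grind [Adj.ne, Adj.symm]

theorem sup_edge_deleteEdges (h : ¬G.Adj l a) : (G ⊔ edge l a).deleteEdges {s(l, a)} = G := by
  ext x y
  simp only [sup_adj, deleteEdges_adj, edge_adj, Set.mem_singleton_iff, Sym2.eq_iff]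
  grind [Adj.symm]

/-- `T` is a tree with vertex set `S`; the vertices outside `S` are isolated. -/
structure IsTreeOn (S : Finset V) (T : SimpleGraph V) : Prop where
  mem_of_adj ⦃x y : V⦄ : T.Adj x y → x ∈ S
  reachable ⦃x : V⦄ : x ∈ S → ∀ ⦃y : V⦄, y ∈ S → T.Reachable x y
  isAcyclic : T.IsAcyclic

theorem isTreeOn_univ_iff [Fintype V] [Nonempty V] : IsTreeOn Finset.univ T ↔ T.IsTree :=
  ⟨fun h ↦ ⟨⟨fun x y ↦ h.reachable (Finset.mem_univ x) (Finset.mem_univ y)⟩, h.isAcyclic⟩,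
    fun h ↦ ⟨fun x _ _ ↦ Finset.mem_univ x, fun x _ y _ ↦ h.connected.preconnected x y,
      h.isAcyclic⟩⟩

theorem isTreeOn_singleton (x : V) : IsTreeOn {x} (⊥ : SimpleGraph V) :=
  ⟨fun _ _ h ↦ h.elim, fun _ hx _ hy ↦ by simp_all, isAcyclic_bot⟩

namespace IsTreeOn

theorem mem_of_adj' (hT : IsTreeOn S T) (h : T.Adj x y) : y ∈ S :=
  hT.mem_of_adj h.symm

theorem not_reachable_of_notMem (hT : IsTreeOn S T) (hl : l ∉ S) (hla : l ≠ a) :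
    ¬T.Reachable l a := by
  rintro ⟨p⟩
  cases p with
  | nil => exact hla rfl
  | cons h _ => exact hl (hT.mem_of_adj h)

theorem neighborSet_sup_edge_left (hT : IsTreeOn S T) (hl : l ∉ S) (ha : a ∈ S) :
    (T ⊔ edge l a).neighborSet l = {a} := by
  ext w
  simp only [neighborSet_sup, Set.mem_union, mem_neighborSet, edge_adj, Set.mem_singleton_iff]
  grind [hT.mem_of_adj]

variable [DecidableEq V]

theorem sup_edge (hT : IsTreeOn S T) (hl : l ∉ S) (ha : a ∈ S) :
    IsTreeOn (insert l S) (T ⊔ edge l a) := by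
  have hla : l ≠ a := by rintro rfl; exact hl ha
  have reach_a : ∀ x ∈ insert l S, (T ⊔ edge l a).Reachable x a := by
    intro x hx
    rcases Finset.mem_insert.1 hx with rfl | hx
    · exact Adj.reachable (Or.inr ((edge_adj ..).2 ⟨Or.inl ⟨rfl, rfl⟩, hla⟩))
    · exact (hT.reachable hx ha).mono le_sup_left
  refine ⟨fun x y h ↦ ?_, fun x hx y hy ↦ (reach_a x hx).trans (reach_a y hy).symm,
    hT.isAcyclic.sup_edge_of_not_reachable (hT.not_reachable_of_notMem hl hla)⟩
  rcases h with h | h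
  · exact Finset.mem_insert_of_mem (hT.mem_of_adj h)
  · rw [edge_adj] at h
    rcases h.1 with ⟨rfl, rfl⟩ | ⟨rfl, rfl⟩
    · exact Finset.mem_insert_self _ _
    · exact Finset.mem_insert_of_mem ha

theorem erase_leaf (hT : IsTreeOn S T) (hl : T.neighborSet l = {a}) :
    IsTreeOn (S.erase l) (T.deleteEdges {s(l, a)}) := by
  have hla : T.Adj l a := by simp [← mem_neighborSet, hl]
  refine ⟨fun x y h ↦ ?_, fun x hx y hy ↦ ?_, hT.isAcyclic.anti (deleteEdges_le _)⟩
  · rw [deleteEdges_adj, Set.mem_singleton_iff] at h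
    refine Finset.mem_erase.2 ⟨?_, hT.mem_of_adj h.1⟩
    rintro rfl
    obtain rfl : y = a := by simpa [hl] using (show y ∈ T.neighborSet x from h.1)
    exact h.2 rfl
  · rw [Finset.mem_erase] at hx hy
    have hlS := hT.mem_of_adj hla
    exact (reachable_deleteEdges_of_neighborSet_eq_singleton hl (hT.reachable hlS hx.2)
      hx.1).symm.trans
      (reachable_deleteEdges_of_neighborSet_eq_singleton hl (hT.reachable hlS hy.2) hy.1)

theorem adj_iff_of_card_eq_two (hT : IsTreeOn S T) (hS : S.card = 2) {x y : V} :
    T.Adj x y ↔ x ∈ S ∧ y ∈ S ∧ x ≠ y := by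
  refine ⟨fun h ↦ ⟨hT.mem_of_adj h, hT.mem_of_adj' h, h.ne⟩, fun ⟨hx, hy, hxy⟩ ↦ ?_⟩
  obtain ⟨p⟩ := hT.reachable hx hy
  cases p with
  | nil => exact absurd rfl hxy
  | cons h _ =>
    obtain ⟨u, v, -, rfl⟩ := Finset.card_eq_two.1 hS
    have := hT.mem_of_adj' h
    simp only [Finset.mem_insert, Finset.mem_singleton] at hx hy this
    grind [h.ne]

theorem ncard_neighborSet_of_card_eq_two (hT : IsTreeOn S T) (hS : S.card = 2) (hv : v ∈ S) :
    (T.neighborSet v).ncard = 1 := by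
  have : T.neighborSet v = ↑(S.erase v) := by
    ext w
    simp [hT.adj_iff_of_card_eq_two hS, hv, and_comm, eq_comm]
  rw [this, Set.ncard_coe_finset, Finset.card_erase_of_mem hv, hS]

theorem ncard_neighborSet_sup_edge [Finite V] (hT : IsTreeOn S T) (hl : l ∉ S) (hv : v ∈ S) :
    ((T ⊔ edge l a).neighborSet v).ncard = (T.neighborSet v).ncard + if a = v then 1 else 0 := by
  split_ifs with hav
  · subst hav
    have : (T ⊔ edge l a).neighborSet a = insert l (T.neighborSet a) := by
      ext w
      simp only [neighborSet_sup, Set.mem_union, mem_neighborSet, edge_adj, Set.mem_insert_iff]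
      grind
    have hlN : l ∉ T.neighborSet a := fun h ↦ hl (hT.mem_of_adj' h)
    rw [this, Set.ncard_insert_of_notMem hlN]
  · congr 1
    ext w
    simp only [neighborSet_sup, Set.mem_union, mem_neighborSet, edge_adj]
    grind

theorem ncard_neighborSet_sup_edge_eq_count [Finite V] (hT : IsTreeOn S T) (hl : l ∉ S)
    (ha : a ∈ S) {c : List V} (hc : ∀ x ∈ c, x ∈ S)
    (hcount : ∀ v ∈ S, (T.neighborSet v).ncard = c.count v + 1) (hv : v ∈ insert l S) :
    ((T ⊔ edge l a).neighborSet v).ncard = (a :: c).count v + 1 := by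
  rcases Finset.mem_insert.1 hv with rfl | hv
  · have hla : v ≠ a := by rintro rfl; exact hl ha
    have hlc : v ∉ c := fun h ↦ hl (hc v h)
    rw [hT.neighborSet_sup_edge_left hl ha, Set.ncard_singleton,
      List.count_eq_zero.2 (by simp [hla, hlc])]
  · rw [hT.ncard_neighborSet_sup_edge hl hv, hcount v hv]
    simp only [List.count_cons, beq_iff_eq]
    ring

end IsTreeOn

variable [Nonempty V]

noncomputable def leafOf (S : Finset V) (T : SimpleGraph V) : V :=
  Classical.epsilon fun v ↦ v ∈ S ∧ (T.neighborSet v).ncard = 1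

theorem IsTreeOn.leafOf_spec [Finite V] (hT : IsTreeOn S T) (hS : 2 ≤ S.card) :
    leafOf S T ∈ S ∧ (T.neighborSet (leafOf S T)).ncard = 1 := by
  obtain ⟨x, hx, y, hy, hxy⟩ := Finset.one_lt_card.1 hS
  obtain ⟨p⟩ := hT.reachable hx hy
  cases p with
  | nil => exact absurd rfl hxy
  | cons h _ =>
    obtain ⟨u, w, hu⟩ := hT.isAcyclic.exists_neighborSet_eq_singleton h
    have huw : T.Adj u w := by simp [← mem_neighborSet, hu]
    exact Classical.epsilon_spec (p := fun v ↦ v ∈ S ∧ (T.neighborSet v).ncard = 1)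
      ⟨u, hT.mem_of_adj huw, by simp [hu]⟩

variable [DecidableEq V]

/-- A Prüfer-type code. Instead of the least leaf, the leaf removed is chosen by
`Classical.epsilon` from the set of leaves: it only matters that the choice is a function of that
set, which the code determines (`IsTreeOn.leafOf_eq`). -/
noncomputable def pruferCode : ℕ → Finset V → SimpleGraph V → List V
  | 0, _, _ => []
  | k + 1, S, T =>
    let l := leafOf S T
    let a := Classical.epsilon (· ∈ T.neighborSet l)
    a :: pruferCode k (S.erase l) (T.deleteEdges {s(l, a)})

variable {c : List V} {k : ℕ}

theorem leafOf_eq_of_count (h : ∀ v ∈ S, (T.neighborSet v).ncard = c.count v + 1) :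
    leafOf S T = Classical.epsilon fun v ↦ v ∈ S ∧ v ∉ c := by
  unfold leafOf
  congr 1
  ext v
  refine and_congr_right fun hv ↦ ?_
  rw [h v hv, ← List.count_eq_zero]
  omega

namespace IsTreeOn

theorem pruferCode_sup_edge (hT : IsTreeOn S T) (hl : l ∉ S) (ha : a ∈ S)
    (hleaf : leafOf (insert l S) (T ⊔ edge l a) = l) (k : ℕ) :
    pruferCode (k + 1) (insert l S) (T ⊔ edge l a) = a :: pruferCode k S T := by
  have hnadj : ¬T.Adj l a := fun h ↦ hl (hT.mem_of_adj h)
  simp only [pruferCode, hleaf, hT.neighborSet_sup_edge_left hl ha, Set.mem_singleton_iff,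
    Classical.epsilon_singleton, Finset.erase_insert hl, sup_edge_deleteEdges hnadj]

variable [Finite V]

theorem exists_eq_sup_edge (hT : IsTreeOn S T) (hS : 2 ≤ S.card) :
    ∃ l S' T' a, leafOf S T = l ∧ IsTreeOn S' T' ∧ l ∉ S' ∧ a ∈ S' ∧ S = insert l S' ∧
      T = T' ⊔ edge l a := by
  obtain ⟨hlS, hl⟩ := hT.leafOf_spec hS
  obtain ⟨a, ha⟩ := Set.ncard_eq_one.1 hl
  have hla : T.Adj (leafOf S T) a := by simp [← mem_neighborSet, ha]
  exact ⟨_, _, _, a, rfl, hT.erase_leaf ha, Finset.notMem_erase _ _,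
    Finset.mem_erase.2 ⟨hla.ne', hT.mem_of_adj' hla⟩, (Finset.insert_erase hlS).symm,
    (deleteEdges_sup_edge hla).symm⟩

theorem length_pruferCode (hT : IsTreeOn S T) (hS : S.card = k + 2) :
    (pruferCode k S T).length = k := by
  induction k generalizing S T with
  | zero => rfl
  | succ k ih =>
    obtain ⟨l, S', T', a, hleaf, hT', hl, ha, rfl, rfl⟩ := hT.exists_eq_sup_edge (by omega)
    rw [Finset.card_insert_of_notMem hl] at hS
    rw [hT'.pruferCode_sup_edge hl ha hleaf, List.length_cons, ih hT' (by omega)]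

theorem mem_of_mem_pruferCode (hT : IsTreeOn S T) (hS : S.card = k + 2) {x : V}
    (hx : x ∈ pruferCode k S T) : x ∈ S := by
  induction k generalizing S T with
  | zero => simp [pruferCode] at hx
  | succ k ih =>
    obtain ⟨l, S', T', a, hleaf, hT', hl, ha, rfl, rfl⟩ := hT.exists_eq_sup_edge (by omega)
    rw [Finset.card_insert_of_notMem hl] at hS
    rw [hT'.pruferCode_sup_edge hl ha hleaf, List.mem_cons] at hx
    rcases hx with rfl | hx
    · exact Finset.mem_insert_of_mem ha
    · exact Finset.mem_insert_of_mem (ih hT' (by omega) hx)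

theorem ncard_neighborSet_eq_count (hT : IsTreeOn S T) (hS : S.card = k + 2) (hv : v ∈ S) :
    (T.neighborSet v).ncard = (pruferCode k S T).count v + 1 := by
  induction k generalizing S T v with
  | zero => simpa [pruferCode] using hT.ncard_neighborSet_of_card_eq_two hS hv
  | succ k ih =>
    obtain ⟨l, S', T', a, hleaf, hT', hl, ha, rfl, rfl⟩ := hT.exists_eq_sup_edge (by omega)
    rw [Finset.card_insert_of_notMem hl] at hS
    rw [hT'.pruferCode_sup_edge hl ha hleaf]
    exact hT'.ncard_neighborSet_sup_edge_eq_count hl ha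
      (fun _ ↦ hT'.mem_of_mem_pruferCode (by omega)) (fun _ ↦ ih hT' (by omega)) hv

theorem leafOf_eq (hT : IsTreeOn S T) (hS : S.card = k + 2) :
    leafOf S T = Classical.epsilon fun v ↦ v ∈ S ∧ v ∉ pruferCode k S T :=
  leafOf_eq_of_count fun _ ↦ hT.ncard_neighborSet_eq_count hS

end IsTreeOn

variable [Finite V]

theorem pruferCode_injective {T₁ T₂ : SimpleGraph V} (hT₁ : IsTreeOn S T₁) (hT₂ : IsTreeOn S T₂)
    (hS : S.card = k + 2) (h : pruferCode k S T₁ = pruferCode k S T₂) : T₁ = T₂ := by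
  induction k generalizing S T₁ T₂ with
  | zero =>
    ext x y
    rw [hT₁.adj_iff_of_card_eq_two hS, hT₂.adj_iff_of_card_eq_two hS]
  | succ k ih =>
    have hleaf : leafOf S T₁ = leafOf S T₂ := by rw [hT₁.leafOf_eq hS, hT₂.leafOf_eq hS, h]
    obtain ⟨l, S₁, T₁', a₁, hl₁, hT₁', hlS₁, ha₁, rfl, rfl⟩ := hT₁.exists_eq_sup_edge (by omega)
    obtain ⟨l₂, S₂, T₂', a₂, hl₂, hT₂', hlS₂, ha₂, hS₁₂, rfl⟩ := hT₂.exists_eq_sup_edge (by omega)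
    obtain rfl : l₂ = l := hl₂ ▸ hleaf ▸ hl₁
    obtain rfl : S₂ = S₁ := by
      rw [← Finset.erase_insert hlS₁, ← Finset.erase_insert hlS₂, hS₁₂]
    rw [Finset.card_insert_of_notMem hlS₁] at hS
    rw [hT₁'.pruferCode_sup_edge hlS₁ ha₁ hl₁, hT₂'.pruferCode_sup_edge hlS₂ ha₂ hl₂,
      List.cons_eq_cons] at h
    rw [h.1, ih hT₁' hT₂' (by omega) h.2]

theorem exists_pruferCode_eq (hS : S.card = k + 2) {p : List V} (hp : p.length = k)
    (hpS : ∀ x ∈ p, x ∈ S) : ∃ T, IsTreeOn S T ∧ pruferCode k S T = p := by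
  induction k generalizing S p with
  | zero =>
    obtain ⟨x, y, hxy, rfl⟩ := Finset.card_eq_two.1 hS
    exact ⟨_, (isTreeOn_singleton y).sup_edge (by simpa using hxy) (Finset.mem_singleton_self y),
      (List.length_eq_zero_iff.1 hp).symm⟩
  | succ k ih =>
    obtain - | ⟨a, s⟩ := p
    · simp at hp
    have hex : ∃ l, l ∈ S ∧ l ∉ a :: s := by
      by_contra! h
      have := Finset.card_le_card fun x hx ↦ List.mem_toFinset.2 (h x hx)
      have := (a :: s).toFinset_card_le
      simp only [List.length_cons] at hp this
      omega
    have hspec := Classical.epsilon_spec hex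
    generalize hl : Classical.epsilon (fun v ↦ v ∈ S ∧ v ∉ a :: s) = l at hspec
    obtain ⟨hlS, hlp⟩ := hspec
    have hsS : ∀ x ∈ s, x ∈ S.erase l := fun x hx ↦
      Finset.mem_erase.2 ⟨by rintro rfl; exact hlp (List.mem_cons_of_mem a hx),
        hpS x (List.mem_cons_of_mem a hx)⟩
    have ha : a ∈ S.erase l := Finset.mem_erase.2 ⟨by rintro rfl; exact hlp List.mem_cons_self,
      hpS a List.mem_cons_self⟩
    have hS' : (S.erase l).card = k + 2 := by rw [Finset.card_erase_of_mem hlS]; omega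
    obtain ⟨T', hT', rfl⟩ := ih hS' (by simpa using hp) hsS
    have hT := hT'.sup_edge (Finset.notMem_erase l S) ha
    have hleaf : leafOf (insert l (S.erase l)) (T' ⊔ edge l a) = l := by
      rw [leafOf_eq_of_count fun v ↦ hT'.ncard_neighborSet_sup_edge_eq_count
        (Finset.notMem_erase l S) ha (fun _ ↦ hT'.mem_of_mem_pruferCode hS')
        (fun _ ↦ hT'.ncard_neighborSet_eq_count hS'), Finset.insert_erase hlS, hl]
    refine ⟨_, Finset.insert_erase hlS ▸ hT, ?_⟩
    rw [← hT'.pruferCode_sup_edge (Finset.notMem_erase l S) ha hleaf, Finset.insert_erase hlS]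

noncomputable def pruferEquiv (hS : S.card = k + 2) :
    {T // IsTreeOn S T} ≃ {p : List V // p.length = k ∧ ∀ x ∈ p, x ∈ S} :=
  Equiv.ofBijective
    (fun T ↦ ⟨pruferCode k S T, T.2.length_pruferCode hS, fun _ ↦ T.2.mem_of_mem_pruferCode hS⟩)
    ⟨fun T₁ T₂ h ↦ Subtype.ext (pruferCode_injective T₁.2 T₂.2 hS (congrArg Subtype.val h)),
      fun p ↦
        let ⟨T, hT, hp⟩ := exists_pruferCode_eq hS p.2.1 p.2.2
        ⟨⟨T, hT⟩, Subtype.ext hp⟩⟩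

end SimpleGraph

/-- **Cayley's formula**: the number of spanning trees of the complete graph on
`n+1` vertices (i.e. trees on the vertex set `{0,…,n}`) is `(n+1)^(n-1)`. -/
theorem stmt_0 (n : ℕ) (hn : 1 ≤ n) :
    Nat.card {T : SimpleGraph (Fin (n + 1)) // T.IsTree} = (n + 1) ^ (n - 1) := by
  have hcard : (Finset.univ : Finset (Fin (n + 1))).card = n - 1 + 2 := by
    rw [Finset.card_univ, Fintype.card_fin]
    omega
  calc Nat.card {T : SimpleGraph (Fin (n + 1)) // T.IsTree}
      = Nat.card {T // SimpleGraph.IsTreeOn Finset.univ T} :=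
        Nat.card_congr (Equiv.subtypeEquivRight fun _ ↦ SimpleGraph.isTreeOn_univ_iff.symm)
    _ = Nat.card (List.Vector (Fin (n + 1)) (n - 1)) :=
        Nat.card_congr ((SimpleGraph.pruferEquiv hcard).trans
          (Equiv.subtypeEquivRight fun _ ↦ by simp))
    _ = (n + 1) ^ (n - 1) := by simp [Nat.card_eq_fintype_card]
end

section
/- If T is a spanning tree of an acyclic directed complete graph G on {0,...,n} and s is a permutation of {1,...,n}, then reorienting T according to the total order 0 < s(1) < ... < s(n) yields the rooted-at-0 orientation of T (i.e., every edge directed away from 0 along tree paths) if and only if the total order induced by s is a linear extension of the tree order ≺_T. -/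
/-- The relation induced on `{0,…,n}` by a spanning tree `T` rooted at `0`:
`i ≺_T j` iff `i ≠ j` and `i` lies on the (unique) path in `T` from `0` to `j`. -/
def treeOrder {n : ℕ} (T : SimpleGraph (Fin (n + 1))) :
    Fin (n + 1) → Fin (n + 1) → Prop :=
  fun i j => i ≠ j ∧ ∀ p : T.Walk 0 j, p.IsPath → i ∈ p.support

/-!
Every edge `{a, b}` of a tree is comparable for `≺_T` (one endpoint lies on the path from `0` to
the other), so a linear extension of `≺_T` orients each tree edge away from `0`. Conversely, every
edge of the path from `0` to `b` points away from `0`, so an order orienting all tree edges away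
from `0` increases along that path, and hence puts every `a ≺_T b` before `b`.
-/

open SimpleGraph Walk

theorem SimpleGraph.Walk.apply_lt_apply_of_mem_support {V α : Type*} [Preorder α]
    {G : SimpleGraph V} {f : V → α} {u v x : V} (p : G.Walk u v)
    (hp : ∀ d ∈ p.darts, f d.fst < f d.snd) (hx : x ∈ p.support) (hxv : x ≠ v) : f x < f v := by
  induction p generalizing x with
  | nil => exact absurd (List.mem_singleton.1 hx) hxv
  | @cons u w v h q ih =>
    have hq : ∀ d ∈ q.darts, f d.fst < f d.snd := fun d hd => hp d (List.mem_cons_of_mem _ hd)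
    rcases List.mem_cons.1 hx with rfl | hx
    · have hxw : f x < f w := hp ⟨(x, w), h⟩ List.mem_cons_self
      by_cases hwv : w = v
      · exact hwv ▸ hxw
      · exact hxw.trans (ih hq q.start_mem_support hwv)
    · exact ih hq hx hxv

section TreeOrder

variable {n : ℕ} {T : SimpleGraph (Fin (n + 1))}

theorem treeOrder_iff_of_isPath (hT : T.IsTree) {a b : Fin (n + 1)} {p : T.Walk 0 b}
    (hp : p.IsPath) : treeOrder T a b ↔ a ≠ b ∧ a ∈ p.support :=
  ⟨fun h => ⟨h.1, h.2 p hp⟩,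
    fun h => ⟨h.1, fun _ hq => (hT.existsUnique_path 0 b).unique hq hp ▸ h.2⟩⟩

theorem treeOrder_or_treeOrder_of_adj (hT : T.IsTree) {a b : Fin (n + 1)} (h : T.Adj a b) :
    treeOrder T a b ∨ treeOrder T b a := by
  obtain ⟨p, hp, -⟩ := hT.existsUnique_path 0 a
  by_cases hb : b ∈ p.support
  · exact .inr ((treeOrder_iff_of_isPath hT hp).2 ⟨h.ne', hb⟩)
  · exact .inl ((treeOrder_iff_of_isPath hT (hp.concat hb h)).2
      ⟨h.ne, p.support_subset_support_concat h p.end_mem_support⟩)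

theorem treeOrder_of_mem_darts (hT : T.IsTree) {b : Fin (n + 1)} {p : T.Walk 0 b}
    (hp : p.IsPath) {d : T.Dart} (hd : d ∈ p.darts) : treeOrder T d.fst d.snd := by
  generalize hr : (0 : Fin (n + 1)) = r at p
  induction p using Walk.concatRec with
  | Hnil => simp at hd
  | Hconcat q h ih =>
    subst hr
    obtain ⟨hq, -⟩ := (concat_isPath_iff h).1 hp
    rw [darts_concat, List.concat_eq_append, List.mem_append, List.mem_singleton] at hd
    rcases hd with hd | rfl
    · exact ih rfl hq hd
    · exact (treeOrder_iff_of_isPath hT hp).2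
        ⟨h.ne, q.support_subset_support_concat h q.end_mem_support⟩

variable {α : Type*} [Preorder α] {f : Fin (n + 1) → α}

theorem lt_of_treeOrder (hT : T.IsTree)
    (hf : ∀ a b, T.Adj a b → treeOrder T a b → f a < f b) {a b : Fin (n + 1)}
    (hab : treeOrder T a b) : f a < f b := by
  obtain ⟨p, hp, -⟩ := hT.existsUnique_path 0 b
  exact p.apply_lt_apply_of_mem_support
    (fun d hd => hf _ _ d.adj (treeOrder_of_mem_darts hT hp hd)) (hab.2 p hp) hab.1

theorem lt_iff_treeOrder_of_adj (hT : T.IsTree) (hf : ∀ a b, treeOrder T a b → f a < f b)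
    {a b : Fin (n + 1)} (h : T.Adj a b) : f a < f b ↔ treeOrder T a b :=
  ⟨fun hlt => (treeOrder_or_treeOrder_of_adj hT h).resolve_right
    fun hba => lt_asymm hlt (hf b a hba), hf a b⟩

end TreeOrder

theorem stmt_8_general (n : ℕ) (T : SimpleGraph (Fin (n + 1))) (hT : T.IsTree)
    (g : Equiv.Perm (Fin (n + 1))) :
    (∀ a b, T.Adj a b → (g.symm a < g.symm b ↔ treeOrder T a b)) ↔
      (∀ a b, treeOrder T a b → g.symm a < g.symm b) :=
  ⟨fun H _ _ => lt_of_treeOrder hT fun a b hab => (H a b hab).2,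
    fun H _ _ => lt_iff_treeOrder_of_adj hT H⟩

/-- Let `T` be a spanning tree of the (acyclically oriented) complete graph `G` on
`{0,…,n}` and `s` a permutation of `{1,…,n}` (encoded by `g` with `g 0 = 0`,
`g i = s(i)`).  Reorienting `T` according to the total order `0 < s(1) < ⋯ < s(n)`
(each edge `{a,b}` directed `a → b` iff `a` precedes `b` in that order) yields the
rooted-at-`0` orientation `T_on` of `T` (each edge directed away from `0` along
tree paths, i.e. each edge `{a,b}` directed `a → b` iff `a ≺_T b`) if and only if
the total order induced by `s` is a linear extension of the tree order `≺_T`. -/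
theorem stmt_8 (n : ℕ) (T : SimpleGraph (Fin (n + 1))) (hT : T.IsTree)
    (g : Equiv.Perm (Fin (n + 1))) (hg : g 0 = 0) :
    (∀ a b, T.Adj a b → (g.symm a < g.symm b ↔ treeOrder T a b)) ↔
      (∀ a b, treeOrder T a b → g.symm a < g.symm b) :=
  stmt_8_general n T hT g
end

section
/- Let T be a spanning tree of the complete graph on {0,...,n} and s a permutation of {1,...,n}. If s is a linear extension of the tree order ≺_T, then the mismatch count between T (oriented by i → j iff i < j) and T reoriented by the order of s equals the distortion d(T) (the number of edges whose orientation in T differs from the rooted-at-0 orientation T_on). -/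
lemma treeOrder_dichotomy {n : ℕ} {T : SimpleGraph (Fin (n + 1))} (hT : T.IsTree)
    {a b : Fin (n + 1)} (hab : T.Adj a b) : treeOrder T a b ∨ treeOrder T b a := by
  obtain ⟨p, hp, hpu⟩ := hT.existsUnique_path 0 a
  by_cases hb : b ∈ p.support
  · right
    refine ⟨hab.ne', fun q hq => ?_⟩
    rwa [hpu q hq]
  · left
    refine ⟨hab.ne, fun q hq => ?_⟩
    have hq' : ((SimpleGraph.Walk.cons hab.symm p.reverse).reverse).IsPath := by
      rw [SimpleGraph.Walk.isPath_reverse_iff, SimpleGraph.Walk.cons_isPath_iff]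
      exact ⟨hp.reverse, by simpa using hb⟩
    obtain ⟨r, hr, hru⟩ := hT.existsUnique_path 0 b
    have h1 : q = r := hru q hq
    have h2 := hru _ hq'
    rw [h1, ← h2]
    simp

/-- Let `T` be a spanning tree of the complete graph `G` on `{0,…,n}`, oriented by
`a → b` iff `a < b`, and let `s` be a permutation of `{1,…,n}` (encoded by `g`
with `g 0 = 0`), whose induced total order is `a` before `b` iff
`g.symm a < g.symm b`.  If `s` is a linear extension of the tree order `≺_T`, then
the mismatch count `mm(T, s)` between the `G`-orientation and the `s`-orientation
of the edges of `T` equals the distortion `d(T)`: the number of edges of `T` whose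
`G`-orientation differs from the rooted-at-`0` orientation `T_on` (each edge
directed away from `0`, i.e. `a → b` iff `a ≺_T b`). -/
theorem stmt_9 (n : ℕ) (T : SimpleGraph (Fin (n + 1))) (hT : T.IsTree)
    (g : Equiv.Perm (Fin (n + 1))) (hg : g 0 = 0)
    (hext : ∀ a b, treeOrder T a b → g.symm a < g.symm b) :
    Nat.card {p : Fin (n + 1) × Fin (n + 1) //
        p.1 < p.2 ∧ T.Adj p.1 p.2 ∧ g.symm p.2 < g.symm p.1} =
      Nat.card {p : Fin (n + 1) × Fin (n + 1) //
        p.1 < p.2 ∧ T.Adj p.1 p.2 ∧ treeOrder T p.2 p.1} := by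
  refine Nat.card_congr (Equiv.subtypeEquivRight fun p => ?_)
  constructor
  · rintro ⟨h1, h2, h3⟩
    refine ⟨h1, h2, ?_⟩
    rcases treeOrder_dichotomy hT h2 with h | h
    · exact absurd (hext _ _ h) (not_lt.2 h3.le)
    · exact h
  · rintro ⟨h1, h2, h3⟩
    exact ⟨h1, h2, hext _ _ h3⟩
end

section
/- The number of linear extensions of the partial order ≺_T induced by a spanning tree T of the complete graph on {0,...,n} rooted at 0 equals the number of permutations s of {1,...,n} such that the path tree T_s is compatible with T, i.e., ∑_{s ∈ S_n} C(T, T_s) equals the number of linear extensions of ≺_T; in particular, when T is the star with edges {0,i} for all i ∈ {1,...,n}, every permutation s satisfies C(T, T_s) = 1, so the sum is n!. -/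
/-- The total order `0 < s(1) < ⋯ < s(n)` induced by the path tree `T_s`, with `s`
(extended by `s(0) = 0`) encoded as `g : Fin (n+1) ≃ Fin (n+1)`, `g 0 = 0`. -/
def pathOrder {n : ℕ} (g : Equiv.Perm (Fin (n + 1))) :
    Fin (n + 1) → Fin (n + 1) → Prop :=
  fun a b => g.symm a < g.symm b

/-- `T` and `T_s` are compatible, `C(T, T_s) = 1`: the orders `≺_T` and `≺_{T_s}`
admit a common linear extension. -/
def Compatible {n : ℕ} (T : SimpleGraph (Fin (n + 1)))
    (g : Equiv.Perm (Fin (n + 1))) : Prop :=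
  ∃ L : Fin (n + 1) → Fin (n + 1) → Prop, IsStrictTotalOrder (Fin (n + 1)) L ∧
    (∀ a b, treeOrder T a b → L a b) ∧ ∀ a b, pathOrder g a b → L a b

open Equiv

lemma isStrictTotalOrder_pathOrder {n : ℕ} (g : Perm (Fin (n + 1))) :
    IsStrictTotalOrder (Fin (n + 1)) (pathOrder g) where
  trichotomous _ _ hab hba := g.symm.injective (le_antisymm (not_lt.1 hba) (not_lt.1 hab))
  irrefl _ := lt_irrefl _
  trans _ _ _ := lt_trans

lemma treeOrder_zero_left {n : ℕ} (T : SimpleGraph (Fin (n + 1))) {b : Fin (n + 1)}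
    (hb : b ≠ 0) : treeOrder T 0 b :=
  ⟨hb.symm, fun p _ => p.start_mem_support⟩

/-- A common extension of `≺_T` and the total order `≺_{T_s}` contains, hence equals, `≺_{T_s}`. -/
theorem fixes_zero_and_compatible_iff {n : ℕ} (T : SimpleGraph (Fin (n + 1)))
    (g : Perm (Fin (n + 1))) :
    (g 0 = 0 ∧ Compatible T g) ↔ ∀ a b, treeOrder T a b → g.symm a < g.symm b := by
  constructor
  · rintro ⟨-, L, hL, hTL, hPL⟩ a b hab
    refine (Ne.lt_or_gt fun h => hab.1 (g.symm.injective h)).resolve_right fun hba => ?_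
    exact hL.irrefl a (hL.trans _ _ _ (hTL a b hab) (hPL b a hba))
  · intro hext
    have hg0 : g 0 = 0 := by
      by_contra hg0
      simpa using hext 0 (g 0) (treeOrder_zero_left T hg0)
    exact ⟨hg0, pathOrder g, isStrictTotalOrder_pathOrder g, hext, fun _ _ => id⟩

lemma card_perm_fixing_zero (n : ℕ) :
    Nat.card {g : Perm (Fin (n + 1)) // g 0 = 0} = n.factorial := by
  have h := (MulAction.stabilizer (Perm (Fin (n + 1))) (0 : Fin (n + 1))).card_mul_index
  rw [MulAction.index_stabilizer_of_transitive, Nat.card_perm, Nat.card_fin,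
    Nat.factorial_succ, mul_comm] at h
  exact Nat.eq_of_mul_eq_mul_left n.succ_pos h

lemma treeOrder_of_star {n : ℕ} {T : SimpleGraph (Fin (n + 1))}
    (hstar : ∀ a b : Fin (n + 1), T.Adj a b ↔ (a = 0 ∧ b ≠ 0) ∨ (b = 0 ∧ a ≠ 0))
    {a b : Fin (n + 1)} (hab : treeOrder T a b) : a = 0 ∧ b ≠ 0 := by
  obtain ⟨hne, hpath⟩ := hab
  have hb : b ≠ 0 := by
    rintro rfl
    exact hne (by simpa using hpath .nil .nil)
  have hadj : T.Adj 0 b := (hstar 0 b).2 (.inl ⟨rfl, hb⟩)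
  have := hpath (.cons hadj .nil) (SimpleGraph.Walk.IsPath.nil.cons (by simpa using hb.symm))
  simp only [SimpleGraph.Walk.support_cons, SimpleGraph.Walk.support_nil, List.mem_cons,
    List.not_mem_nil, or_false] at this
  exact ⟨this.resolve_right hne, hb⟩

lemma linearExtension_star_iff {n : ℕ} {T : SimpleGraph (Fin (n + 1))}
    (hstar : ∀ a b : Fin (n + 1), T.Adj a b ↔ (a = 0 ∧ b ≠ 0) ∨ (b = 0 ∧ a ≠ 0))
    (g : Perm (Fin (n + 1))) :
    (∀ a b, treeOrder T a b → g.symm a < g.symm b) ↔ g 0 = 0 := by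
  refine ⟨fun hext => ((fixes_zero_and_compatible_iff T g).2 hext).1, fun hg0 a b hab => ?_⟩
  obtain ⟨rfl, hb⟩ := treeOrder_of_star hstar hab
  rw [(symm_apply_eq g).2 hg0.symm]
  exact Fin.pos_of_ne_zero fun h => hb (by rw [← hg0, ← h, apply_symm_apply])

theorem stmt_19_general (n : ℕ) (T : SimpleGraph (Fin (n + 1))) :
    Nat.card {g : Equiv.Perm (Fin (n + 1)) // g 0 = 0 ∧ Compatible T g} =
      Nat.card {g : Equiv.Perm (Fin (n + 1)) //
        ∀ a b, treeOrder T a b → g.symm a < g.symm b} ∧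
    ((∀ a b : Fin (n + 1), T.Adj a b ↔ (a = 0 ∧ b ≠ 0) ∨ (b = 0 ∧ a ≠ 0)) →
      (∀ g : Equiv.Perm (Fin (n + 1)), g 0 = 0 → Compatible T g) ∧
      Nat.card {g : Equiv.Perm (Fin (n + 1)) // g 0 = 0 ∧ Compatible T g} =
        Nat.factorial n) := by
  have hcount := Nat.card_congr (subtypeEquivRight (fixes_zero_and_compatible_iff T))
  refine ⟨hcount, fun hstar => ⟨fun g hg0 => ?_, ?_⟩⟩
  · exact ((fixes_zero_and_compatible_iff T g).2 ((linearExtension_star_iff hstar g).2 hg0)).2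
  · rw [hcount, Nat.card_congr (subtypeEquivRight (linearExtension_star_iff hstar)),
      card_perm_fixing_zero]

/-- For a spanning tree `T` of the complete graph on `{0,…,n}` rooted at `0`, the
number of permutations `s` of `{1,…,n}` whose path tree `T_s` is compatible with
`T` (i.e. `∑_{s ∈ S_n} C(T, T_s)`) equals the number of linear extensions of the
tree order `≺_T`.  In particular, if `T` is the star with edges `{0,i}`,
`i ∈ {1,…,n}`, then every `s` satisfies `C(T, T_s) = 1` and the count is `n!`. -/
theorem stmt_19 (n : ℕ) (T : SimpleGraph (Fin (n + 1))) (hT : T.IsTree) :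
    Nat.card {g : Equiv.Perm (Fin (n + 1)) // g 0 = 0 ∧ Compatible T g} =
      Nat.card {g : Equiv.Perm (Fin (n + 1)) //
        ∀ a b, treeOrder T a b → g.symm a < g.symm b} ∧
    ((∀ a b : Fin (n + 1), T.Adj a b ↔ (a = 0 ∧ b ≠ 0) ∨ (b = 0 ∧ a ≠ 0)) →
      (∀ g : Equiv.Perm (Fin (n + 1)), g 0 = 0 → Compatible T g) ∧
      Nat.card {g : Equiv.Perm (Fin (n + 1)) // g 0 = 0 ∧ Compatible T g} =
        Nat.factorial n) :=
  stmt_19_general n T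
end
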